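/- Let l ≥ 1 be an integer and G a finite r-uniform hypergraph. Then τ^{(r-1)}(G) ≤ |D(G)| · [1/l + (1 - 1/l)^{r-1}]. -/

import Mathlib

variable {V : Type*} [DecidableEq V]

/-- `M` is an `m`-matching of `G`: a set of edges pairwise intersecting in fewer
than `m` vertices. -/
def IsMMatching (G : Finset (Finset V)) (m : ℕ) (M : Finset (Finset V)) : Prop :=
  M ⊆ G ∧ ∀ e ∈ M, ∀ f ∈ M, e ≠ f → (e ∩ f).card < m

/-- `C` is an `m`-cover of `G`: a family of `m`-element vertex sets such that every
edge of `G` contains a member of `C`. -/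
def IsMCover (G : Finset (Finset V)) (m : ℕ) (C : Finset (Finset V)) : Prop :=
  (∀ s ∈ C, s.card = m) ∧ ∀ e ∈ G, ∃ s ∈ C, s ⊆ e

/-- The `m`-matching number `ν^{(m)}(G)`. -/
noncomputable def nuM (G : Finset (Finset V)) (m : ℕ) : ℕ :=
  sSup {k | ∃ M, IsMMatching G m M ∧ M.card = k}

/-- The `m`-covering number `τ^{(m)}(G)`. -/
noncomputable def tauM (G : Finset (Finset V)) (m : ℕ) : ℕ :=
  sInf {k | ∃ C, IsMCover G m C ∧ C.card = k}

/-- `D(G)` (with parameter `m`): the `m`-element vertex subsets contained in at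
least one edge of `G`. -/
def Dset (G : Finset (Finset V)) (m : ℕ) : Finset (Finset V) :=
  G.biUnion fun e => e.powersetCard m

/-!
Colour the vertices with `l` colours and fix a shift `j ∈ ℤ/l`. Keep the `(r-1)`-sets
`σ ∈ D(G)` whose colour sum plus `j`, read as a residue in `[0, l)`, is at most the number
`d(σ)` of colours missing from `σ`. Every edge `e` contains a kept set: if `e` shows `k`
colours, deleting a vertex `v` of colour `c` gives the residue `w(e) - c + j`; these are `k`
distinct residues, so one of them is at most `l - k = d(e) ≤ d(e \ v)`. For a fixed colouring
each `σ` is kept for at most `d(σ) + 1` shifts, and a uniformly random colouring misses a given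
colour on `σ` with probability `(1 - 1/l)^(r-1)`; averaging the sizes of these covers over
colourings and shifts gives the bound.
-/

open Finset Fintype

section Colorings

variable {α β : Type*} [Fintype α] [DecidableEq α] [Fintype β] [DecidableEq β]

theorem card_filter_forall_ne (s : Finset α) (b : β) :
    #{f : α → β | ∀ a ∈ s, f a ≠ b} = (card β - 1) ^ #s * card β ^ (card α - #s) := by
  have : ({f : α → β | ∀ a ∈ s, f a ≠ b} : Finset (α → β)) =
      piFinset fun a => if a ∈ s then univ.erase b else univ := by
    ext f
    simp only [mem_filter, mem_univ, true_and, mem_piFinset]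
    refine forall_congr' fun a => ?_
    split_ifs with ha <;> simp [ha]
  rw [this, card_piFinset]
  simp only [apply_ite card, card_erase_of_mem (mem_univ b), card_univ]
  rw [prod_ite, prod_const, prod_const, filter_mem_eq_inter, univ_inter, filter_not,
    card_univ_sdiff, filter_mem_eq_inter, univ_inter]

theorem sum_card_compl_image [Nonempty β] (s : Finset α) :
    (∑ f : α → β, #(s.image f)ᶜ : ℝ) =
      card β ^ card α * (card β * (1 - 1 / card β) ^ #s) := by
  have hcount : ∑ f : α → β, #(s.image f)ᶜ =
      card β * ((card β - 1) ^ #s * card β ^ (card α - #s)) := by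
    have hmissed (f : α → β) : (s.image f)ᶜ = ({b | ∀ a ∈ s, f a ≠ b} : Finset β) := by
      ext; simp
    simp only [hmissed, card_filter]
    rw [sum_comm]
    simp only [← card_filter, card_filter_forall_ne, sum_const, card_univ, smul_eq_mul]
  have hβ : 1 ≤ card β := card_pos
  have hs : #s ≤ card α := card_le_univ s
  rw [← Nat.cast_sum, hcount]
  push_cast [Nat.cast_sub hβ]
  rw [one_sub_div (by positivity), div_pow, ← pow_sub_mul_pow _ hs]
  field_simp

end Colorings

namespace ZMod

variable {l : ℕ} [NeZero l]

theorem exists_val_sub_le_sub_card (x : ZMod l) {T : Finset (ZMod l)} (hT : T.Nonempty) :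
    ∃ c ∈ T, (x - c).val ≤ l - #T := by
  have hinj : Function.Injective fun c : ZMod l => (x - c).val :=
    (val_injective l).comp sub_right_injective
  have hTl : #T ≤ l := by simpa using card_le_univ T
  obtain ⟨n, hn⟩ : ((T.image fun c => (x - c).val) ∩ range (l - #T + 1)).Nonempty := by
    refine inter_nonempty_of_card_lt_card_add_card (s := range l) ?_ ?_ ?_
    · simp [subset_iff, val_lt]
    · exact range_subset_range.2 (by have := hT.card_pos; omega)
    · rw [card_image_of_injective _ hinj, card_range, card_range]; omega
  obtain ⟨hnT, hn⟩ := mem_inter.1 hn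
  obtain ⟨c, hc, rfl⟩ := mem_image.1 hnT
  exact ⟨c, hc, Nat.lt_succ_iff.1 (mem_range.1 hn)⟩

theorem card_filter_val_add_le (x : ZMod l) (d : ℕ) :
    #{j : ZMod l | (x + j).val ≤ d} ≤ d + 1 := by
  simpa using card_le_card_of_injOn (fun j : ZMod l => (x + j).val) (t := range (d + 1))
    (fun j hj => by simpa [Nat.lt_succ_iff] using hj)
    ((val_injective l).comp (add_right_injective x)).injOn

end ZMod

section FranklRodl

variable {l : ℕ} [NeZero l]

/- The colouring `f` is the partition `V_i = f⁻¹ {i}`: `∑ v ∈ σ, f v` is `w(σ) mod l` and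
`#(σ.image f)ᶜ` is the number `d(σ)` of blocks missing `σ`. -/
def coverFamily (D : Finset (Finset V)) (f : V → ZMod l) (j : ZMod l) : Finset (Finset V) :=
  {σ ∈ D | (∑ v ∈ σ, f v + j).val ≤ #(σ.image f)ᶜ}

theorem exists_subset_card_sub_one_val_le (f : V → ZMod l) (j : ZMod l) (e : Finset V) :
    ∃ σ ⊆ e, #σ = #e - 1 ∧ (∑ v ∈ σ, f v + j).val ≤ #(σ.image f)ᶜ := by
  rcases e.eq_empty_or_nonempty with rfl | he
  · exact ⟨∅, subset_rfl, rfl, by simpa using (ZMod.val_lt j).le⟩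
  obtain ⟨c, hc, hle⟩ := ZMod.exists_val_sub_le_sub_card (∑ v ∈ e, f v + j) (he.image f)
  obtain ⟨v, hv, rfl⟩ := mem_image.1 hc
  refine ⟨e.erase v, erase_subset v e, card_erase_of_mem hv, ?_⟩
  have hmissed : l - #(e.image f) ≤ #((e.erase v).image f)ᶜ :=
    calc l - #(e.image f) = #(e.image f)ᶜ := by rw [card_compl, ZMod.card]
      _ ≤ _ := card_le_card (compl_subset_compl.2 (image_subset_image (erase_subset v e)))
  rw [sum_erase_eq_sub hv, sub_add_eq_add_sub]
  exact hle.trans hmissed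

theorem isMCover_coverFamily {G : Finset (Finset V)} {r : ℕ} (hG : ∀ e ∈ G, #e = r)
    (f : V → ZMod l) (j : ZMod l) : IsMCover G (r - 1) (coverFamily (Dset G (r - 1)) f j) := by
  refine ⟨fun σ hσ => ?_, fun e he => ?_⟩
  · obtain ⟨e, -, hσ⟩ := mem_biUnion.1 (mem_filter.1 hσ).1
    exact (mem_powersetCard.1 hσ).2
  · obtain ⟨σ, hσe, hσ, hle⟩ := exists_subset_card_sub_one_val_le f j e
    rw [hG e he] at hσ
    have hσD : σ ∈ Dset G (r - 1) :=
      mem_biUnion.2 ⟨e, he, mem_powersetCard.2 ⟨hσe, hσ⟩⟩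
    exact ⟨σ, mem_filter.2 ⟨hσD, hle⟩, hσe⟩

theorem tauM_le_card {α : Type*} {G C : Finset (Finset α)} {m : ℕ} (h : IsMCover G m C) :
    tauM G m ≤ #C :=
  Nat.sInf_le ⟨C, h, rfl⟩

theorem sum_card_coverFamily_le {α : Type*} (D : Finset (Finset α)) (f : α → ZMod l) :
    ∑ j, #(coverFamily D f j) ≤ ∑ σ ∈ D, (#(σ.image f)ᶜ + 1) := by
  simp only [coverFamily, card_filter]
  rw [sum_comm]
  refine sum_le_sum fun σ _ => ?_
  rw [← card_filter]
  exact ZMod.card_filter_val_add_le _ _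

theorem image_extend_val {β : Type*} [DecidableEq β] {U σ : Finset V} (hσ : σ ⊆ U)
    (χ : U → β) (g : V → β) :
    σ.image (Function.extend Subtype.val χ g) = (σ.subtype (· ∈ U)).image χ := by
  ext b
  simp only [mem_image, mem_subtype, Subtype.exists]
  constructor
  · rintro ⟨v, hv, rfl⟩
    exact ⟨v, hσ hv, hv, (Subtype.val_injective.extend_apply χ g ⟨v, hσ hv⟩).symm⟩
  · rintro ⟨v, hvU, hv, rfl⟩
    exact ⟨v, hv, Subtype.val_injective.extend_apply χ g ⟨v, hvU⟩⟩

theorem sum_sum_card_coverFamily_extend_le {D : Finset (Finset V)} {U : Finset V} {m : ℕ}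
    (hD : ∀ σ ∈ D, #σ = m ∧ σ ⊆ U) :
    (∑ χ : U → ZMod l, ∑ j, #(coverFamily D (Function.extend Subtype.val χ 0) j) : ℝ) ≤
      #D * (l ^ #U * (1 + l * (1 - 1 / l) ^ m)) := by
  have hcolorings : (card (U → ZMod l) : ℝ) = l ^ #U := by simp
  calc _ ≤ ∑ χ : U → ZMod l, ∑ σ ∈ D,
          ((#(σ.image (Function.extend Subtype.val χ 0))ᶜ : ℝ) + 1) :=
        sum_le_sum fun χ _ => by exact_mod_cast sum_card_coverFamily_le D _
    _ = ∑ σ ∈ D,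
          (∑ χ : U → ZMod l, (#((σ.subtype (· ∈ U)).image χ)ᶜ : ℝ) + l ^ #U) := by
        rw [sum_comm]
        refine sum_congr rfl fun σ hσ => ?_
        rw [sum_add_distrib, sum_const, card_univ, nsmul_one, hcolorings]
        simp only [image_extend_val (hD σ hσ).2]
    _ = ∑ _σ ∈ D, (l ^ #U * (1 + l * (1 - 1 / l) ^ m) : ℝ) := by
        refine sum_congr rfl fun σ hσ => ?_
        rw [sum_card_compl_image, card_subtype, filter_true_of_mem (hD σ hσ).2, (hD σ hσ).1,
          card_coe, ZMod.card]
        ring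
    _ = _ := by rw [sum_const, nsmul_eq_mul]

end FranklRodl

theorem stmt6 (r l : ℕ) (hl : 1 ≤ l) (G : Finset (Finset V))
    (hG : ∀ e ∈ G, e.card = r) :
    (tauM G (r - 1) : ℝ) ≤
      ((Dset G (r - 1)).card : ℝ) * (1 / l + (1 - 1 / (l : ℝ)) ^ (r - 1)) := by
  have : NeZero l := ⟨by omega⟩
  -- `V` may be infinite, so average over colourings of the finite set of covered vertices.
  set U := G.biUnion id
  have hD : ∀ σ ∈ Dset G (r - 1), #σ = r - 1 ∧ σ ⊆ U := by
    simp only [Dset, mem_biUnion, mem_powersetCard]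
    rintro σ ⟨e, he, hσe, hσ⟩
    exact ⟨hσ, hσe.trans (subset_biUnion_of_mem id he)⟩
  have hlower : ((l : ℝ) ^ #U * l) * tauM G (r - 1) ≤ ∑ χ : U → ZMod l, ∑ j,
      (#(coverFamily (Dset G (r - 1)) (Function.extend Subtype.val χ 0) j) : ℝ) := by
    calc ((l : ℝ) ^ #U * l) * tauM G (r - 1)
        = ∑ _χ : U → ZMod l, ∑ _j : ZMod l, (tauM G (r - 1) : ℝ) := by simp [mul_assoc]
      _ ≤ _ := by
        gcongr with χ _ j _
        exact_mod_cast tauM_le_card (isMCover_coverFamily hG _ j)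
  refine le_of_mul_le_mul_left ?_ (by positivity : (0 : ℝ) < l ^ #U * l)
  refine (hlower.trans (sum_sum_card_coverFamily_extend_le hD)).trans_eq ?_
  field_simp
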